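/- Let κ_1 ≥ ... ≥ κ_n > 0 with κ_l ≥ δ κ_1 and κ_{l+1} ≤ δ' κ_1, where 1 ≤ l ≤ k−1 and 0 < δ' ≤ δ < 1/2. Then for all p ≠ q with p, q ≤ l: σ_{l-1}(κ|pq) ≤ (C δ'/δ) · σ_{l-1}(κ|p), for a constant C depending only on n and l. -/

import Mathlib

open Finset

/-- The `k`-th elementary symmetric polynomial of `κ : Fin n → ℝ`. -/
noncomputable def esymm (n k : ℕ) (κ : Fin n → ℝ) : ℝ :=
  ∑ s ∈ Finset.univ.powersetCard k, ∏ i ∈ s, κ i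

/-- `σ_k(κ|p)`: elementary symmetric polynomial with the `p`-th entry deleted. -/
noncomputable def esymmDel (n k : ℕ) (κ : Fin n → ℝ) (p : Fin n) : ℝ :=
  ∑ s ∈ (Finset.univ.erase p).powersetCard k, ∏ i ∈ s, κ i

/-- `σ_k(κ|pq)`: elementary symmetric polynomial with the `p`-th and `q`-th entries deleted. -/
noncomputable def esymmDel2 (n k : ℕ) (κ : Fin n → ℝ) (p q : Fin n) : ℝ :=
  ∑ s ∈ ((Finset.univ.erase p).erase q).powersetCard k, ∏ i ∈ s, κ i

/-!
Indices are 0-based, so the large curvatures are `κ i` with `i < l`. Every monomial of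
`σ_{l-1}(κ|pq)` is at most `δ'/δ` times the single monomial `∏_{i < l, i ≠ p} κ i` of `σ_{l-1}(κ|p)`:
a set `s` avoiding `p` and `q` differs from `t = {i < l} \ {p}` by trading `m ≥ 1` indices `< l`
(where `κ ≥ κ (l-1)`) for indices `≥ l` (where `κ ≤ κ l`), and `κ l ≤ δ' κ 0 ≤ (δ'/δ) κ (l-1)`.
There are at most `2^n` monomials, so `C = 2^n` works.
-/

section ExchangeBound

variable {R ι : Type*} [CommSemiring R] [PartialOrder R] [IsOrderedRing R]
  {f : ι → R} {ρ b : R}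

theorem prod_le_mul_prod_of_card_eq {u v : Finset ι} (huv : #u = #v) (hv : v.Nonempty)
    (hρ₀ : 0 ≤ ρ) (hρ₁ : ρ ≤ 1) (hb : 0 ≤ b) (hu₀ : ∀ i ∈ u, 0 ≤ f i)
    (hu : ∀ i ∈ u, f i ≤ ρ * b) (hvb : ∀ j ∈ v, b ≤ f j) :
    ∏ i ∈ u, f i ≤ ρ * ∏ j ∈ v, f j :=
  calc ∏ i ∈ u, f i ≤ ∏ _i ∈ u, ρ * b := prod_le_prod hu₀ hu
    _ = ρ ^ #v * b ^ #v := by rw [prod_const, huv, mul_pow]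
    _ ≤ ρ * b ^ #v := by
        gcongr; exact pow_le_of_le_one hρ₀ hρ₁ hv.card_pos.ne'
    _ = ρ * ∏ _j ∈ v, b := by rw [prod_const]
    _ ≤ ρ * ∏ j ∈ v, f j := by gcongr with j hj; exact hvb j hj

theorem prod_le_mul_prod_of_sdiff [DecidableEq ι] {s t : Finset ι} (hst : #s = #t)
    (hts : ¬t ⊆ s) (hρ₀ : 0 ≤ ρ) (hρ₁ : ρ ≤ 1) (hb : 0 ≤ b) (hs₀ : ∀ i ∈ s, 0 ≤ f i)
    (hs : ∀ i ∈ s \ t, f i ≤ ρ * b) (ht : ∀ j ∈ t \ s, b ≤ f j) :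
    ∏ i ∈ s, f i ≤ ρ * ∏ j ∈ t, f j := by
  have hsdiff : ∏ i ∈ s \ t, f i ≤ ρ * ∏ j ∈ t \ s, f j :=
    prod_le_mul_prod_of_card_eq (card_sdiff_comm hst) (sdiff_nonempty.mpr hts) hρ₀ hρ₁ hb
      (fun i hi => hs₀ i (mem_sdiff.mp hi).1) hs ht
  calc ∏ i ∈ s, f i = (∏ i ∈ s ∩ t, f i) * ∏ i ∈ s \ t, f i :=
        (prod_inter_mul_prod_sdiff s t f).symm
    _ ≤ (∏ i ∈ s ∩ t, f i) * (ρ * ∏ j ∈ t \ s, f j) := by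
        gcongr
        exact prod_nonneg fun i hi => hs₀ i (mem_inter.mp hi).1
    _ = ρ * ∏ j ∈ t, f j := by
        rw [inter_comm, mul_left_comm, prod_inter_mul_prod_sdiff]

end ExchangeBound

section Curvatures

variable {n l : ℕ} (hln : l < n) {κ : Fin n → ℝ} {ρ : ℝ} {p q : Fin n}

theorem prod_le_mul_prod_Iio_erase (hpos : ∀ i, 0 < κ i) (hanti : Antitone κ)
    (hρ₀ : 0 ≤ ρ) (hρ₁ : ρ ≤ 1) (hgap : κ ⟨l, hln⟩ ≤ ρ * κ ⟨l - 1, by omega⟩)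
    (hp : p.val < l) (hq : q.val < l) (hpq : p ≠ q) {s : Finset (Fin n)}
    (hs : s ∈ ((univ.erase p).erase q).powersetCard (l - 1)) :
    ∏ i ∈ s, κ i ≤ ρ * ∏ i ∈ (Iio ⟨l, hln⟩).erase p, κ i := by
  obtain ⟨hsub, hcard⟩ := mem_powersetCard.mp hs
  refine prod_le_mul_prod_of_sdiff ?_ ?_ hρ₀ hρ₁ (hpos ⟨l - 1, by omega⟩).le
    (fun i _ => (hpos i).le) ?_ ?_
  · rw [hcard, card_erase_of_mem (by simpa [Fin.lt_def] using hp), Fin.card_Iio]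
  · intro hts
    have := hsub (hts (mem_erase.mpr ⟨hpq.symm, mem_Iio.mpr (Fin.lt_def.mpr hq)⟩))
    simp at this
  · intro i hi
    have hip : i ≠ p := (mem_erase.mp (mem_erase.mp (hsub (mem_sdiff.mp hi).1)).2).1
    have hli : l ≤ i.val := by simpa [Fin.lt_def, hip] using (mem_sdiff.mp hi).2
    exact (hanti (Fin.le_def.mpr hli)).trans hgap
  · intro j hj
    have hjl : j.val < l := by simpa [Fin.lt_def] using (mem_erase.mp (mem_sdiff.mp hj).1).2
    exact hanti (Fin.le_def.mpr (Nat.le_sub_one_of_lt hjl))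

theorem esymmDel2_le_mul_esymmDel (hpos : ∀ i, 0 < κ i) (hanti : Antitone κ)
    (hρ₀ : 0 ≤ ρ) (hρ₁ : ρ ≤ 1) (hgap : κ ⟨l, hln⟩ ≤ ρ * κ ⟨l - 1, by omega⟩)
    (hp : p.val < l) (hq : q.val < l) (hpq : p ≠ q) :
    esymmDel2 n (l - 1) κ p q ≤ 2 ^ n * ρ * esymmDel n (l - 1) κ p := by
  set A := ∏ i ∈ (Iio ⟨l, hln⟩).erase p, κ i
  have hA : A ≤ esymmDel n (l - 1) κ p := by
    refine single_le_sum (f := fun s => ∏ i ∈ s, κ i)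
      (fun s _ => prod_nonneg fun i _ => (hpos i).le) (mem_powersetCard.mpr ⟨?_, ?_⟩)
    · exact erase_subset_erase p (subset_univ _)
    · rw [card_erase_of_mem (by simpa [Fin.lt_def] using hp), Fin.card_Iio]
  have hcard : (#(((univ.erase p).erase q).powersetCard (l - 1)) : ℝ) ≤ 2 ^ n := by
    rw [card_powersetCard]
    exact_mod_cast (Nat.choose_le_two_pow _ _).trans
      (Nat.pow_le_pow_right two_pos (card_le_univ _ |>.trans_eq (Fintype.card_fin n)))
  calc esymmDel2 n (l - 1) κ p q
      ≤ #(((univ.erase p).erase q).powersetCard (l - 1)) • (ρ * A) :=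
        sum_le_card_nsmul _ _ _ fun s hs =>
          prod_le_mul_prod_Iio_erase hln hpos hanti hρ₀ hρ₁ hgap hp hq hpq hs
    _ ≤ 2 ^ n * (ρ * A) := by
        rw [nsmul_eq_mul]
        gcongr
        exact mul_nonneg hρ₀ (prod_nonneg fun i _ => (hpos i).le)
    _ ≤ 2 ^ n * ρ * esymmDel n (l - 1) κ p := by
        rw [mul_assoc]; gcongr

end Curvatures

/-- Off-diagonal absorption: σ_{l-1}(κ|pq) ≤ (C δ'/δ) σ_{l-1}(κ|p) for p ≠ q, p,q ≤ l. -/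
theorem offdiag_absorb (n l : ℕ) (hl : 1 ≤ l) :
    ∃ C : ℝ, 0 < C ∧ ∀ (k : ℕ) (hlk : l ≤ k - 1) (hkn : k ≤ n),
      ∀ κ : Fin n → ℝ, (∀ i, 0 < κ i) →
      (∀ i j : Fin n, i ≤ j → κ j ≤ κ i) →
      ∀ δ δ' : ℝ, 0 < δ' → δ' ≤ δ → δ < 1 / 2 →
      δ * κ ⟨0, by omega⟩ ≤ κ ⟨l - 1, by omega⟩ →
      κ ⟨l, by omega⟩ ≤ δ' * κ ⟨0, by omega⟩ →
      ∀ p q : Fin n, p ≠ q → p.val < l → q.val < l →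
      esymmDel2 n (l - 1) κ p q ≤ (C * δ' / δ) * esymmDel n (l - 1) κ p := by
  refine ⟨2 ^ n, by positivity, ?_⟩
  intro k hlk hkn κ hpos hanti δ δ' hδ' hδ'δ _ hκl1 hκl p q hpq hp hq
  have hδ : 0 < δ := hδ'.trans_le hδ'δ
  have hgap : κ ⟨l, by omega⟩ ≤ δ' / δ * κ ⟨l - 1, by omega⟩ :=
    calc κ ⟨l, _⟩ ≤ δ' * κ ⟨0, _⟩ := hκl
      _ = δ' / δ * (δ * κ ⟨0, _⟩) := by field_simp
      _ ≤ δ' / δ * κ ⟨l - 1, _⟩ := by gcongr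
  have := esymmDel2_le_mul_esymmDel (by omega) hpos hanti (by positivity)
    ((div_le_one hδ).mpr hδ'δ) hgap hp hq hpq
  rwa [mul_div_assoc]
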